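/- arXiv:1311.0104 — 2 statements merged into one kernel-verified Lean document; each statement's English description precedes it below -/
import Mathlib

section
/- Let (A, L) be a Lipschitz pair, i.e. A is a unital C*-algebra and L is a seminorm defined on a norm-dense subspace of the self-adjoint part sa(A) whose kernel is exactly ℝ·1_A. Then the Monge–Kantorovich function mk_L(φ, ψ) = sup{ |φ(a) − ψ(a)| : a ∈ sa(A), L(a) ≤ 1 } defines an extended metric on the state space S(A): it is symmetric, satisfies the triangle inequality, and mk_L(φ, ψ) = 0 if and only if φ = ψ. -/
/-!
Symmetry and the triangle inequality hold for any supremum of the pseudometrics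
`edist (φ a) (ψ a)`. For separation, `mkDist L φ ψ = 0` forces `φ = ψ` on the unit ball of `L`,
hence by rescaling and `ker L = ℝ·1` on the whole domain of `L`. States are continuous, so
they then agree on its closure, which is all of `sa(A)`, and `sa(A)` spans `A` over `ℂ`.
-/

open scoped ENNReal

section common
variable {A : Type*} [NormedRing A] [StarRing A] [NormedAlgebra ℂ A]

/-- A state: unital positive linear functional. -/
def IsState (φ : A →ₗ[ℂ] ℂ) : Prop :=
  φ 1 = 1 ∧ ∀ a : A, ∃ r : ℝ, 0 ≤ r ∧ φ (star a * a) = r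

/-- Monge–Kantorovich extended distance associated with a seminorm
(with the convention `L a = ⊤` outside the domain of `L`). -/
noncomputable def mkDist (L : A → ℝ≥0∞) (φ ψ : A →ₗ[ℂ] ℂ) : ℝ≥0∞ :=
  ⨆ a ∈ {a : A | IsSelfAdjoint a ∧ L a ≤ 1}, edist (φ a) (ψ a)
end common

open scoped ComplexOrder

section States

variable {A : Type*} [NormedRing A] [StarRing A] [NormedAlgebra ℂ A] {φ : A →ₗ[ℂ] ℂ}

lemma IsState.apply_nonneg [PartialOrder A] [StarOrderedRing A] (hφ : IsState φ) {a : A}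
    (ha : 0 ≤ a) : 0 ≤ φ a := by
  rw [StarOrderedRing.nonneg_iff] at ha
  induction ha using AddSubmonoid.closure_induction with
  | mem _ hb =>
    obtain ⟨s, rfl⟩ := hb
    obtain ⟨r, hr, hφs⟩ := hφ.2 s
    rw [hφs]
    exact_mod_cast hr
  | zero => simp
  | add _ _ _ _ hb hc => rw [map_add]; exact add_nonneg hb hc

/-- A state is positive for the spectral order, hence bounded, as is every positive linear
functional on a C⋆-algebra. -/
lemma IsState.continuous [CStarRing A] [CompleteSpace A] [StarModule ℂ A] (hφ : IsState φ) :
    Continuous φ := by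
  let _ : CStarAlgebra A := {}
  let _ := CStarAlgebra.spectralOrder A
  have _ := CStarAlgebra.spectralOrderedRing A
  exact map_continuous (PositiveLinearMap.mk₀ φ fun _ => hφ.apply_nonneg)

end States

section MongeKantorovich

variable {A : Type*} [NormedRing A] [StarRing A] [NormedAlgebra ℂ A] {L : A → ℝ≥0∞}
  {φ ψ χ : A →ₗ[ℂ] ℂ}

lemma edist_le_mkDist {a : A} (ha : IsSelfAdjoint a) (hL : L a ≤ 1) :
    edist (φ a) (ψ a) ≤ mkDist L φ ψ :=
  le_iSup₂ (f := fun a (_ : a ∈ {a : A | IsSelfAdjoint a ∧ L a ≤ 1}) => edist (φ a) (ψ a))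
    a ⟨ha, hL⟩

lemma mkDist_comm : mkDist L φ ψ = mkDist L ψ φ :=
  iSup_congr fun _ => iSup_congr fun _ => edist_comm _ _

lemma mkDist_triangle : mkDist L φ χ ≤ mkDist L φ ψ + mkDist L ψ χ :=
  iSup₂_le fun _ ⟨ha, hL⟩ => (edist_triangle _ _ _).trans <|
    add_le_add (edist_le_mkDist ha hL) (edist_le_mkDist ha hL)

@[simp]
lemma mkDist_self : mkDist L φ φ = 0 := by
  simp [mkDist]

lemma apply_eq_of_mkDist_eq_zero (h : mkDist L φ ψ = 0) {a : A} (ha : IsSelfAdjoint a)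
    (hL : L a ≤ 1) : φ a = ψ a :=
  edist_eq_zero.mp <| nonpos_iff_eq_zero.mp <| h ▸ edist_le_mkDist ha hL

lemma eqOn_of_mkDist_eq_zero [StarModule ℂ A]
    (hsmul : ∀ (r : ℝ) (a : A), IsSelfAdjoint a → L ((r : ℂ) • a) = (‖r‖₊ : ℝ≥0∞) * L a)
    (hker : ∀ a : A, IsSelfAdjoint a → L a = 0 → ∃ r : ℝ, a = (r : ℂ) • 1)
    (h1 : φ 1 = ψ 1) (h : mkDist L φ ψ = 0) :
    Set.EqOn φ ψ {a | IsSelfAdjoint a ∧ L a ≠ ⊤} := by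
  rintro a ⟨ha, hLtop⟩
  by_cases hL0 : L a = 0
  · obtain ⟨r, rfl⟩ := hker a ha hL0
    simp only [map_smul, h1]
  set c : ℝ := (L a).toReal
  have hc : 0 < c := ENNReal.toReal_pos hL0 hLtop
  have hscaled : L (((c⁻¹ : ℝ) : ℂ) • a) = 1 := by
    rw [hsmul _ _ ha, ← enorm_eq_nnnorm, Real.enorm_eq_ofReal (inv_nonneg.mpr hc.le),
      ENNReal.ofReal_inv_of_pos hc, ENNReal.ofReal_toReal hLtop, ENNReal.inv_mul_cancel hL0 hLtop]
  have hsa : IsSelfAdjoint (((c⁻¹ : ℝ) : ℂ) • a) :=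
    IsSelfAdjoint.smul (Complex.conj_ofReal _) ha
  have hagree := apply_eq_of_mkDist_eq_zero h hsa hscaled.le
  rw [map_smul, map_smul] at hagree
  exact smul_right_injective ℂ (by simpa using hc.ne') hagree

end MongeKantorovich

theorem stmt0_general {A : Type*} [NormedRing A] [StarRing A] [CStarRing A]
    [NormedAlgebra ℂ A] [CompleteSpace A] [StarModule ℂ A]
    (L : A → ℝ≥0∞)
    -- `L` is densely defined on the self-adjoint part:
    (hdense : ∀ a : A, IsSelfAdjoint a →
      a ∈ closure {b : A | IsSelfAdjoint b ∧ L b ≠ ⊤})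
    (hsmul : ∀ (r : ℝ) (a : A), IsSelfAdjoint a →
      L (((r : ℂ)) • a) = (‖r‖₊ : ℝ≥0∞) * L a)
    -- the kernel of `L` is exactly `ℝ·1`:
    (hker : ∀ a : A, IsSelfAdjoint a → (L a = 0 ↔ ∃ r : ℝ, a = ((r : ℂ)) • 1)) :
    (∀ φ ψ : A →ₗ[ℂ] ℂ, IsState φ → IsState ψ → mkDist L φ ψ = mkDist L ψ φ) ∧
    (∀ φ ψ χ : A →ₗ[ℂ] ℂ, IsState φ → IsState ψ → IsState χ →
      mkDist L φ χ ≤ mkDist L φ ψ + mkDist L ψ χ) ∧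
    (∀ φ ψ : A →ₗ[ℂ] ℂ, IsState φ → IsState ψ →
      (mkDist L φ ψ = 0 ↔ φ = ψ)) := by
  refine ⟨fun _ _ _ _ => mkDist_comm, fun _ _ _ _ _ _ => mkDist_triangle,
    fun φ ψ hφ hψ => ⟨fun h => ?_, by rintro rfl; exact mkDist_self⟩⟩
  have hdom := eqOn_of_mkDist_eq_zero hsmul (fun a ha => (hker a ha).1) (hφ.1.trans hψ.1.symm) h
  exact LinearMap.ext_on span_selfAdjoint fun a ha =>
    hdom.closure hφ.continuous hψ.continuous (hdense a ha)

/-- For a Lipschitz pair `(A, L)`, the Monge–Kantorovich function is an extended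
metric on the state space: symmetric, triangle inequality, and zero iff equal. -/
theorem stmt0 {A : Type*} [NormedRing A] [StarRing A] [CStarRing A]
    [NormedAlgebra ℂ A] [CompleteSpace A] [StarModule ℂ A]
    (L : A → ℝ≥0∞)
    -- `L` is densely defined on the self-adjoint part:
    (hdense : ∀ a : A, IsSelfAdjoint a →
      a ∈ closure {b : A | IsSelfAdjoint b ∧ L b ≠ ⊤})
    -- `L` is a seminorm:
    (hsub : ∀ a b : A, IsSelfAdjoint a → IsSelfAdjoint b → L (a + b) ≤ L a + L b)
    (hsmul : ∀ (r : ℝ) (a : A), IsSelfAdjoint a →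
      L (((r : ℂ)) • a) = (‖r‖₊ : ℝ≥0∞) * L a)
    -- the kernel of `L` is exactly `ℝ·1`:
    (hker : ∀ a : A, IsSelfAdjoint a → (L a = 0 ↔ ∃ r : ℝ, a = ((r : ℂ)) • 1)) :
    (∀ φ ψ : A →ₗ[ℂ] ℂ, IsState φ → IsState ψ → mkDist L φ ψ = mkDist L ψ φ) ∧
    (∀ φ ψ χ : A →ₗ[ℂ] ℂ, IsState φ → IsState ψ → IsState χ →
      mkDist L φ χ ≤ mkDist L φ ψ + mkDist L ψ χ) ∧
    (∀ φ ψ : A →ₗ[ℂ] ℂ, IsState φ → IsState ψ →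
      (mkDist L φ ψ = 0 ↔ φ = ψ)) :=
  stmt0_general L hdense hsmul hker
end

section
/- Let D and A be unital C*-algebras, π : D → A a unital *-epimorphism, L_D a seminorm densely defined on sa(D), and define the quotient seminorm L_A(a) = inf{ L_D(d) : d ∈ sa(D), π(d) = a } for a ∈ sa(A). Then for any two states φ, ψ of A, the Monge–Kantorovich distances satisfy mk_{L_A}(φ, ψ) = mk_{L_D}(φ∘π, ψ∘π). -/
open scoped ENNReal

/-- The dual map of a quotient of quantum metric structures is an isometry for the
Monge–Kantorovich metrics. -/
theorem stmt5 {D A : Type*}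
    [NormedRing D] [StarRing D] [CStarRing D] [NormedAlgebra ℂ D]
    [CompleteSpace D] [StarModule ℂ D]
    [NormedRing A] [StarRing A] [CStarRing A] [NormedAlgebra ℂ A]
    [CompleteSpace A] [StarModule ℂ A]
    (π : D →⋆ₐ[ℂ] A) (hπ : Function.Surjective π)
    (LD : D → ℝ≥0∞)
    -- `L_D` is densely defined on sa(D) and is a seminorm there:
    (hdense : ∀ d : D, IsSelfAdjoint d →
      d ∈ closure {x : D | IsSelfAdjoint x ∧ LD x ≠ ⊤})
    (hsub : ∀ x y : D, IsSelfAdjoint x → IsSelfAdjoint y → LD (x + y) ≤ LD x + LD y)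
    (hsmul : ∀ (r : ℝ) (x : D), IsSelfAdjoint x →
      LD (((r : ℂ)) • x) = (‖r‖₊ : ℝ≥0∞) * LD x)
    -- `L_A` is the quotient seminorm of `L_D` along `π`:
    (LA : A → ℝ≥0∞)
    (hLA : ∀ a : A, LA a = ⨅ d ∈ {d : D | IsSelfAdjoint d ∧ π d = a}, LD d) :
    ∀ φ ψ : A →ₗ[ℂ] ℂ, IsState φ → IsState ψ →
      mkDist LA φ ψ =
        mkDist LD (φ ∘ₗ π.toAlgHom.toLinearMap) (ψ ∘ₗ π.toAlgHom.toLinearMap) := by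
  intro φ ψ hφ hψ
  unfold mkDist
  apply le_antisymm
  · refine iSup₂_le fun a ha => ?_
    refine ENNReal.le_of_forall_lt_one_mul_le fun c hc => ?_
    rcases eq_or_ne c 0 with rfl | hc0
    · simp
    have hct : c ≠ ⊤ := (hc.trans ENNReal.one_lt_top).ne
    set r : NNReal := c.toNNReal with hr
    have hcr : (r : ℝ≥0∞) = c := ENNReal.coe_toNNReal hct
    have hr0 : r ≠ 0 := by
      intro h
      apply hc0
      rw [← hcr, h, ENNReal.coe_zero]
    have h1 : LA a < (r : ℝ≥0∞)⁻¹ := by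
      refine lt_of_le_of_lt ha.2 ?_
      exact ENNReal.one_lt_inv.mpr (hcr ▸ hc)
    rw [hLA a] at h1
    obtain ⟨d, hd2⟩ := iInf_lt_iff.mp h1
    obtain ⟨⟨hd_sa, hd_pi⟩, hdlt⟩ := iInf_lt_iff.mp hd2
    set d' : D := ((r : ℝ) : ℂ) • d with hd'
    have hd'sa : IsSelfAdjoint d' := by
      rw [IsSelfAdjoint, hd', star_smul, Complex.star_def, Complex.conj_ofReal,
        hd_sa.star_eq]
    have hLD' : LD d' ≤ 1 := by
      rw [hd', hsmul (r : ℝ) d hd_sa]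
      have hnn : ‖(r : ℝ)‖₊ = r := by simp
      rw [hnn]
      calc (r : ℝ≥0∞) * LD d ≤ (r : ℝ≥0∞) * (r : ℝ≥0∞)⁻¹ :=
            mul_le_mul_right hdlt.le _
        _ = 1 := ENNReal.mul_inv_cancel (by exact_mod_cast hr0) (by simp)
    have key : edist ((φ ∘ₗ π.toAlgHom.toLinearMap) d')
        ((ψ ∘ₗ π.toAlgHom.toLinearMap) d') = c * edist (φ a) (ψ a) := by
      simp only [LinearMap.comp_apply, AlgHom.toLinearMap_apply,
        StarAlgHom.coe_toAlgHom, hd', map_smul, hd_pi]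
      rw [edist_smul₀, ← hcr]
      congr 1
      simp
    calc c * edist (φ a) (ψ a)
        = edist ((φ ∘ₗ π.toAlgHom.toLinearMap) d')
            ((ψ ∘ₗ π.toAlgHom.toLinearMap) d') := key.symm
      _ ≤ _ := le_iSup₂ (f := fun x (_ : x ∈ {x : D | IsSelfAdjoint x ∧ LD x ≤ 1}) =>
            edist ((φ ∘ₗ π.toAlgHom.toLinearMap) x) ((ψ ∘ₗ π.toAlgHom.toLinearMap) x))
            d' ⟨hd'sa, hLD'⟩
  · refine iSup₂_le fun d hd => ?_
    have hsa : IsSelfAdjoint (π d) := by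
      rw [IsSelfAdjoint, ← map_star]
      exact congrArg π hd.1
    have hLA' : LA (π d) ≤ 1 := by
      rw [hLA]
      exact le_trans (iInf₂_le d ⟨hd.1, rfl⟩) hd.2
    have h := le_iSup₂ (f := fun a (_ : a ∈ {a : A | IsSelfAdjoint a ∧ LA a ≤ 1}) =>
        edist (φ a) (ψ a)) (π d) ⟨hsa, hLA'⟩
    simpa using h
end
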